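/- Tripartite entropic Bell inequality $M_3$: for any six jointly distributed discrete random variables $A_0,A_1,B_0,B_1,C_0,C_1$, $H(A_1,B_1,C_1)-H(A_1,B_0,C_0)-H(A_0,B_1,C_0)-H(A_0,B_0,C_1)-H(A_0,B_0,C_0)+H(A_0,B_0)+H(A_0,C_0)+H(B_0,C_0)\leq 0$. -/
import Mathlib

open Finset

/-- Shannon entropy of a discrete random variable `X` on a finite probability
space with weights `p`. -/
noncomputable def shannonEntropy {Ω α : Type*} [Fintype Ω] [Fintype α] [DecidableEq α]
    (p : Ω → ℝ) (X : Ω → α) : ℝ :=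
  ∑ x : α, Real.negMulLog (∑ ω ∈ Finset.univ.filter (fun ω => X ω = x), p ω)

section Aux

set_option linter.unusedSectionVars false

variable {Ω : Type*} [Fintype Ω] (p : Ω → ℝ)

/-- subadditivity of negMulLog on sums of nonnegative reals -/
lemma negMulLog_sum_le' {ι : Type*} (s : Finset ι) (f : ι → ℝ) (hf : ∀ i ∈ s, 0 ≤ f i) :
    Real.negMulLog (∑ i ∈ s, f i) ≤ ∑ i ∈ s, Real.negMulLog (f i) := by
  have h1 : Real.negMulLog (∑ i ∈ s, f i)
      = ∑ i ∈ s, -(f i * Real.log (∑ j ∈ s, f j)) := by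
    rw [Real.negMulLog, Finset.sum_neg_distrib, ← Finset.sum_mul, neg_mul]
  rw [h1]
  apply Finset.sum_le_sum
  intro i hi
  rcases eq_or_lt_of_le (hf i hi) with h0 | h0
  · simp [← h0]
  · have hle : f i ≤ ∑ j ∈ s, f j := Finset.single_le_sum hf hi
    have hlog := Real.log_le_log h0 hle
    rw [Real.negMulLog]
    nlinarith

/-- the Gibbs-type pointwise inequality -/
lemma gibbs_pointwise (P Q : ℝ) (hP : 0 ≤ P) (hQ : 0 ≤ Q) (h0 : P ≠ 0 → Q ≠ 0) :
    Real.negMulLog P ≤ Q - P - P * Real.log Q := by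
  rcases eq_or_lt_of_le hP with h | hPpos
  · simp [← h, hQ]
  · have hQpos : 0 < Q := lt_of_le_of_ne hQ (Ne.symm (h0 (ne_of_gt hPpos)))
    have h1 : Real.log (Q / P) ≤ Q / P - 1 :=
      Real.log_le_sub_one_of_pos (div_pos hQpos hPpos)
    rw [Real.log_div (ne_of_gt hQpos) (ne_of_gt hPpos)] at h1
    have h2 : P * (Real.log Q - Real.log P) ≤ P * (Q / P - 1) :=
      mul_le_mul_of_nonneg_left h1 hP
    have h3 : P * (Q / P - 1) = Q - P := by field_simp
    rw [Real.negMulLog]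
    nlinarith [h2, h3]

lemma sum_rot {ι κ μ : Type*} [Fintype ι] [Fintype κ] [Fintype μ] (G : ι → κ → μ → ℝ) :
    ∑ i, ∑ k, ∑ m, G i k m = ∑ m, ∑ i, ∑ k, G i k m := by
  calc ∑ i, ∑ k, ∑ m, G i k m = ∑ i, ∑ m, ∑ k, G i k m :=
        Finset.sum_congr rfl (fun i _ => Finset.sum_comm)
    _ = ∑ m, ∑ i, ∑ k, G i k m := Finset.sum_comm

/-- core submodularity inequality for nonnegative arrays -/
lemma submod_core {ι κ μ : Type*} [Fintype ι] [Fintype κ] [Fintype μ]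
    (r : ι → κ → μ → ℝ) (hr : ∀ i k m, 0 ≤ r i k m) :
    (∑ i, ∑ k, ∑ m, Real.negMulLog (r i k m)) + ∑ m, Real.negMulLog (∑ i, ∑ k, r i k m)
      ≤ (∑ i, ∑ m, Real.negMulLog (∑ k, r i k m)) +
        ∑ k, ∑ m, Real.negMulLog (∑ i, r i k m) := by
  classical
  set a : ι → μ → ℝ := fun i m => ∑ k, r i k m with ha
  set b : κ → μ → ℝ := fun k m => ∑ i, r i k m with hb
  set s : μ → ℝ := fun m => ∑ i, ∑ k, r i k m with hs
  have hann : ∀ i m, 0 ≤ a i m := fun i m => Finset.sum_nonneg fun k _ => hr i k m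
  have hbnn : ∀ k m, 0 ≤ b k m := fun k m => Finset.sum_nonneg fun i _ => hr i k m
  have hsnn : ∀ m, 0 ≤ s m := fun m =>
    Finset.sum_nonneg fun i _ => Finset.sum_nonneg fun k _ => hr i k m
  have hra : ∀ i k m, r i k m ≤ a i m := fun i k m =>
    Finset.single_le_sum (fun k _ => hr i k m) (Finset.mem_univ k)
  have hrb : ∀ i k m, r i k m ≤ b k m := fun i k m =>
    Finset.single_le_sum (fun i _ => hr i k m) (Finset.mem_univ i)
  have hrs : ∀ i k m, r i k m ≤ s m := fun i k m =>
    le_trans (hra i k m) (Finset.single_le_sum (fun i _ => hann i m) (Finset.mem_univ i))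
  -- pointwise inequality
  have key : ∀ i k m,
      Real.negMulLog (r i k m) ≤
        a i m * b k m / s m - r i k m
          - r i k m * Real.log (a i m) - r i k m * Real.log (b k m)
          + r i k m * Real.log (s m) := by
    intro i k m
    rcases eq_or_lt_of_le (hr i k m) with h0 | h0
    · rw [← h0]
      simp only [Real.negMulLog_zero, zero_mul, sub_zero, add_zero]
      have : 0 ≤ a i m * b k m / s m := div_nonneg (mul_nonneg (hann i m) (hbnn k m)) (hsnn m)
      linarith
    · have hapos : 0 < a i m := lt_of_lt_of_le h0 (hra i k m)
      have hbpos : 0 < b k m := lt_of_lt_of_le h0 (hrb i k m)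
      have hspos : 0 < s m := lt_of_lt_of_le h0 (hrs i k m)
      have hQpos : 0 < a i m * b k m / s m := div_pos (mul_pos hapos hbpos) hspos
      have hgibbs := gibbs_pointwise (r i k m) (a i m * b k m / s m) (hr i k m)
        (le_of_lt hQpos) (fun _ => ne_of_gt hQpos)
      have hlog : Real.log (a i m * b k m / s m)
          = Real.log (a i m) + Real.log (b k m) - Real.log (s m) := by
        rw [Real.log_div (by positivity) (ne_of_gt hspos),
          Real.log_mul (ne_of_gt hapos) (ne_of_gt hbpos)]
      rw [hlog] at hgibbs
      nlinarith [hgibbs]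
  -- sum the pointwise inequality
  have hsum : (∑ i, ∑ k, ∑ m, Real.negMulLog (r i k m)) ≤
      ∑ i, ∑ k, ∑ m, (a i m * b k m / s m - r i k m
        - r i k m * Real.log (a i m) - r i k m * Real.log (b k m)
        + r i k m * Real.log (s m)) := by
    apply Finset.sum_le_sum; intro i _
    apply Finset.sum_le_sum; intro k _
    apply Finset.sum_le_sum; intro m _
    exact key i k m
  -- compute the pieces of the RHS
  have hq : (∑ i, ∑ k, ∑ m, a i m * b k m / s m) = ∑ m, s m := by
    rw [sum_rot]
    apply Finset.sum_congr rfl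
    intro m _
    rcases eq_or_lt_of_le (hsnn m) with h0 | h0
    · have hz : ∀ i, a i m = 0 := by
        intro i
        have h1 : (∑ i, a i m) = s m := rfl
        have h2 : (∑ i, a i m) = 0 := by rw [h1, ← h0]
        exact (Finset.sum_eq_zero_iff_of_nonneg (fun i _ => hann i m)).mp h2 i
          (Finset.mem_univ i)
      simp [hz, ← h0]
    · have e : (∑ i, ∑ k, a i m * b k m / s m) = (∑ i, a i m) * (∑ k, b k m) / s m := by
        rw [Finset.sum_mul_sum, Finset.sum_div]
        apply Finset.sum_congr rfl
        intro i _
        rw [Finset.sum_div]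
      rw [e]
      have h1 : (∑ i, a i m) = s m := rfl
      have h2 : (∑ k, b k m) = s m := Finset.sum_comm
      rw [h1, h2]
      field_simp
  have hrtot : (∑ i, ∑ k, ∑ m, r i k m) = ∑ m, s m := by
    rw [sum_rot]
  have hla : (∑ i, ∑ k, ∑ m, r i k m * Real.log (a i m))
      = - ∑ i, ∑ m, Real.negMulLog (a i m) := by
    rw [← Finset.sum_neg_distrib]
    apply Finset.sum_congr rfl
    intro i _
    rw [Finset.sum_comm, ← Finset.sum_neg_distrib]
    apply Finset.sum_congr rfl
    intro m _
    rw [← Finset.sum_mul]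
    have h1 : (∑ k, r i k m) = a i m := rfl
    rw [h1, Real.negMulLog]
    ring
  have hlb : (∑ i, ∑ k, ∑ m, r i k m * Real.log (b k m))
      = - ∑ k, ∑ m, Real.negMulLog (b k m) := by
    rw [Finset.sum_comm, ← Finset.sum_neg_distrib]
    apply Finset.sum_congr rfl
    intro k _
    rw [Finset.sum_comm, ← Finset.sum_neg_distrib]
    apply Finset.sum_congr rfl
    intro m _
    rw [← Finset.sum_mul]
    have h1 : (∑ i, r i k m) = b k m := rfl
    rw [h1, Real.negMulLog]
    ring
  have hls : (∑ i, ∑ k, ∑ m, r i k m * Real.log (s m))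
      = - ∑ m, Real.negMulLog (s m) := by
    rw [sum_rot, ← Finset.sum_neg_distrib]
    apply Finset.sum_congr rfl
    intro m _
    simp only [← Finset.sum_mul]
    have h1 : (∑ i, ∑ k, r i k m) = s m := rfl
    rw [h1, Real.negMulLog]
    ring
  have hexpand : (∑ i, ∑ k, ∑ m, (a i m * b k m / s m - r i k m
        - r i k m * Real.log (a i m) - r i k m * Real.log (b k m)
        + r i k m * Real.log (s m)))
      = (∑ i, ∑ k, ∑ m, a i m * b k m / s m) - (∑ i, ∑ k, ∑ m, r i k m)
        - (∑ i, ∑ k, ∑ m, r i k m * Real.log (a i m))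
        - (∑ i, ∑ k, ∑ m, r i k m * Real.log (b k m))
        + (∑ i, ∑ k, ∑ m, r i k m * Real.log (s m)) := by
    simp only [Finset.sum_add_distrib, Finset.sum_sub_distrib]
  rw [hexpand, hq, hrtot, hla, hlb, hls] at hsum
  linarith [hsum]

variable {β γ δ : Type*} [Fintype β] [DecidableEq β] [Fintype γ] [DecidableEq γ]
  [Fintype δ] [DecidableEq δ]

/-- marginalization of the weight of a pair -/
lemma weight_pair_marginal (X : Ω → β) (Y : Ω → γ) (x : β) :
    ∑ y : γ, (∑ ω ∈ Finset.univ.filter (fun ω => (X ω, Y ω) = (x, y)), p ω)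
      = ∑ ω ∈ Finset.univ.filter (fun ω => X ω = x), p ω := by
  classical
  rw [← Finset.sum_fiberwise (Finset.univ.filter (fun ω => X ω = x)) Y p]
  apply Finset.sum_congr rfl
  intro y _
  apply Finset.sum_congr _ (fun _ _ => rfl)
  ext ω
  simp only [Finset.mem_filter, Finset.mem_univ, true_and, Prod.ext_iff]
  all_goals tauto
/-- entropy is invariant under injective post-composition -/
lemma shannonEntropy_comp_inj (X : Ω → β) (f : β → γ) (hf : Function.Injective f) :
    shannonEntropy p (fun ω => f (X ω)) = shannonEntropy p X := by
  classical
  unfold shannonEntropy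
  rw [← Finset.sum_subset (Finset.subset_univ (Finset.univ.image f))]
  · rw [Finset.sum_image (fun x _ y _ h => hf h)]
    apply Finset.sum_congr rfl
    intro x _
    congr 1
    apply Finset.sum_congr _ (fun _ _ => rfl)
    ext ω
    simp [hf.eq_iff]
  · intro y _ hy
    have h : Finset.univ.filter (fun ω => f (X ω) = y) = ∅ := by
      apply Finset.filter_eq_empty_iff.mpr
      intro ω _
      intro h
      exact hy (Finset.mem_image.mpr ⟨X ω, Finset.mem_univ _, h⟩)
    simp [h]

/-- monotonicity: H(X) ≤ H(X, Y) -/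
lemma shannonEntropy_mono (hp : ∀ ω, 0 ≤ p ω) (X : Ω → β) (Y : Ω → γ) :
    shannonEntropy p X ≤ shannonEntropy p (fun ω => (X ω, Y ω)) := by
  classical
  unfold shannonEntropy
  rw [Fintype.sum_prod_type]
  apply Finset.sum_le_sum
  intro x _
  rw [← weight_pair_marginal p X Y x]
  exact negMulLog_sum_le' Finset.univ _
    (fun y _ => Finset.sum_nonneg (fun ω _ => hp ω))

/-- submodularity: H(X,Y,Z) + H(Z) ≤ H(X,Z) + H(Y,Z) -/
lemma shannonEntropy_submod (hp : ∀ ω, 0 ≤ p ω) (X : Ω → β) (Y : Ω → γ) (Z : Ω → δ) :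
    shannonEntropy p (fun ω => (X ω, Y ω, Z ω)) + shannonEntropy p Z
      ≤ shannonEntropy p (fun ω => (X ω, Z ω)) + shannonEntropy p (fun ω => (Y ω, Z ω)) := by
  classical
  set r : β → γ → δ → ℝ :=
    fun x y z => ∑ ω ∈ Finset.univ.filter (fun ω => (X ω, Y ω, Z ω) = (x, y, z)), p ω with hr
  have hrnn : ∀ x y z, 0 ≤ r x y z := fun x y z => Finset.sum_nonneg (fun ω _ => hp ω)
  have h1 : shannonEntropy p (fun ω => (X ω, Y ω, Z ω))
      = ∑ x, ∑ y, ∑ z, Real.negMulLog (r x y z) := by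
    unfold shannonEntropy
    rw [Fintype.sum_prod_type]
    apply Finset.sum_congr rfl
    intro x _
    rw [Fintype.sum_prod_type]
  have hmargY : ∀ x z, (∑ y, r x y z)
      = ∑ ω ∈ Finset.univ.filter (fun ω => (X ω, Z ω) = (x, z)), p ω := by
    intro x z
    rw [← Finset.sum_fiberwise (Finset.univ.filter (fun ω => (X ω, Z ω) = (x, z))) Y p]
    apply Finset.sum_congr rfl
    intro y _
    apply Finset.sum_congr _ (fun _ _ => rfl)
    ext ω
    simp only [Finset.mem_filter, Finset.mem_univ, true_and, Prod.ext_iff]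
    tauto
  have hmargX : ∀ y z, (∑ x, r x y z)
      = ∑ ω ∈ Finset.univ.filter (fun ω => (Y ω, Z ω) = (y, z)), p ω := by
    intro y z
    rw [← Finset.sum_fiberwise (Finset.univ.filter (fun ω => (Y ω, Z ω) = (y, z))) X p]
    apply Finset.sum_congr rfl
    intro x _
    apply Finset.sum_congr _ (fun _ _ => rfl)
    ext ω
    simp only [Finset.mem_filter, Finset.mem_univ, true_and, Prod.ext_iff]
    tauto
  have hmargXY : ∀ z, (∑ x, ∑ y, r x y z)
      = ∑ ω ∈ Finset.univ.filter (fun ω => Z ω = z), p ω := by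
    intro z
    rw [← Finset.sum_fiberwise (Finset.univ.filter (fun ω => Z ω = z)) X p]
    apply Finset.sum_congr rfl
    intro x _
    rw [← Finset.sum_fiberwise ((Finset.univ.filter (fun ω => Z ω = z)).filter
      (fun ω => X ω = x)) Y p]
    apply Finset.sum_congr rfl
    intro y _
    apply Finset.sum_congr _ (fun _ _ => rfl)
    ext ω
    simp only [Finset.mem_filter, Finset.mem_univ, true_and, Prod.ext_iff]
    tauto
  have h2 : shannonEntropy p (fun ω => (X ω, Z ω))
      = ∑ x, ∑ z, Real.negMulLog (∑ y, r x y z) := by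
    unfold shannonEntropy
    rw [Fintype.sum_prod_type]
    apply Finset.sum_congr rfl
    intro x _
    apply Finset.sum_congr rfl
    intro z _
    rw [hmargY x z]
  have h3 : shannonEntropy p (fun ω => (Y ω, Z ω))
      = ∑ y, ∑ z, Real.negMulLog (∑ x, r x y z) := by
    unfold shannonEntropy
    rw [Fintype.sum_prod_type]
    apply Finset.sum_congr rfl
    intro y _
    apply Finset.sum_congr rfl
    intro z _
    rw [hmargX y z]
  have h4 : shannonEntropy p Z = ∑ z, Real.negMulLog (∑ x, ∑ y, r x y z) := by
    unfold shannonEntropy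
    apply Finset.sum_congr rfl
    intro z _
    rw [hmargXY z]
  rw [h1, h2, h3, h4]
  exact submod_core r hrnn

end Aux

/-- Tripartite entropic Bell inequality `M₃`. -/
theorem tripartite_M3 {Ω α : Type*} [Fintype Ω] [Fintype α] [DecidableEq α]
    (p : Ω → ℝ) (hp : ∀ ω, 0 ≤ p ω) (hsum : ∑ ω, p ω = 1)
    (A0 A1 B0 B1 C0 C1 : Ω → α) :
    shannonEntropy p (fun ω => (A1 ω, B1 ω, C1 ω)) -
      shannonEntropy p (fun ω => (A1 ω, B0 ω, C0 ω)) -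
      shannonEntropy p (fun ω => (A0 ω, B1 ω, C0 ω)) -
      shannonEntropy p (fun ω => (A0 ω, B0 ω, C1 ω)) -
      shannonEntropy p (fun ω => (A0 ω, B0 ω, C0 ω)) +
      shannonEntropy p (fun ω => (A0 ω, B0 ω)) +
      shannonEntropy p (fun ω => (A0 ω, C0 ω)) +
      shannonEntropy p (fun ω => (B0 ω, C0 ω)) ≤ 0 := by
  classical
  have mono1 : shannonEntropy p (fun ω => (A1 ω, B1 ω, C1 ω))
      ≤ shannonEntropy p (fun ω => ((A1 ω, B1 ω, C1 ω), (A0 ω, B0 ω, C0 ω))) :=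
    shannonEntropy_mono p hp _ _
  have rel1 : shannonEntropy p
        (fun ω => (A1 ω, ((B1 ω, C1 ω, A0 ω), (B0 ω, C0 ω))))
      = shannonEntropy p (fun ω => ((A1 ω, B1 ω, C1 ω), (A0 ω, B0 ω, C0 ω))) :=
    shannonEntropy_comp_inj p
      (fun ω => ((A1 ω, B1 ω, C1 ω), (A0 ω, B0 ω, C0 ω)))
      (fun x => (x.1.1, ((x.1.2.1, x.1.2.2, x.2.1), (x.2.2.1, x.2.2.2))))
      (by rintro ⟨⟨a, b, c⟩, d, e, f⟩ ⟨⟨a', b', c'⟩, d', e', f'⟩ h; simp_all)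
  have sub1 := shannonEntropy_submod p hp A1 (fun ω => (B1 ω, C1 ω, A0 ω))
    (fun ω => (B0 ω, C0 ω))
  have rel2 : shannonEntropy p
        (fun ω => (B1 ω, ((C1 ω, B0 ω), (A0 ω, C0 ω))))
      = shannonEntropy p (fun ω => ((B1 ω, C1 ω, A0 ω), (B0 ω, C0 ω))) :=
    shannonEntropy_comp_inj p
      (fun ω => ((B1 ω, C1 ω, A0 ω), (B0 ω, C0 ω)))
      (fun x => (x.1.1, ((x.1.2.1, x.2.1), (x.1.2.2, x.2.2))))
      (by rintro ⟨⟨a, b, c⟩, d, e⟩ ⟨⟨a', b', c'⟩, d', e'⟩ h; simp_all)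
  have sub2 := shannonEntropy_submod p hp B1 (fun ω => (C1 ω, B0 ω))
    (fun ω => (A0 ω, C0 ω))
  have rel3 : shannonEntropy p
        (fun ω => (C1 ω, (C0 ω, (A0 ω, B0 ω))))
      = shannonEntropy p (fun ω => ((C1 ω, B0 ω), (A0 ω, C0 ω))) :=
    shannonEntropy_comp_inj p
      (fun ω => ((C1 ω, B0 ω), (A0 ω, C0 ω)))
      (fun x => (x.1.1, (x.2.2, (x.2.1, x.1.2))))
      (by rintro ⟨⟨a, b⟩, c, d⟩ ⟨⟨a', b'⟩, c', d'⟩ h; simp_all)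
  have sub3 := shannonEntropy_submod p hp C1 C0 (fun ω => (A0 ω, B0 ω))
  have swap1 : shannonEntropy p (fun ω => (B1 ω, (A0 ω, C0 ω)))
      = shannonEntropy p (fun ω => (A0 ω, B1 ω, C0 ω)) :=
    shannonEntropy_comp_inj p
      (fun ω => (A0 ω, B1 ω, C0 ω))
      (fun x => (x.2.1, (x.1, x.2.2)))
      (by rintro ⟨a, b, c⟩ ⟨a', b', c'⟩ h; simp_all)
  have swap2 : shannonEntropy p (fun ω => (C1 ω, (A0 ω, B0 ω)))
      = shannonEntropy p (fun ω => (A0 ω, B0 ω, C1 ω)) :=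
    shannonEntropy_comp_inj p
      (fun ω => (A0 ω, B0 ω, C1 ω))
      (fun x => (x.2.2, (x.1, x.2.1)))
      (by rintro ⟨a, b, c⟩ ⟨a', b', c'⟩ h; simp_all)
  have swap3 : shannonEntropy p (fun ω => (C0 ω, (A0 ω, B0 ω)))
      = shannonEntropy p (fun ω => (A0 ω, B0 ω, C0 ω)) :=
    shannonEntropy_comp_inj p
      (fun ω => (A0 ω, B0 ω, C0 ω))
      (fun x => (x.2.2, (x.1, x.2.1)))
      (by rintro ⟨a, b, c⟩ ⟨a', b', c'⟩ h; simp_all)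
  rw [← rel1] at mono1
  rw [rel2, swap1, ← rel3] at sub2
  rw [swap2, swap3] at sub3
  linarith [mono1, sub1, sub2, sub3]
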